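/- If K is an edge-path connected complex and Ω ⊆ K Π K is a categorical subcomplex (the inclusion ι_Ω is in the contiguity class of a constant map), then Ω is a Farber subcomplex; indeed σ = π₁|_Ω satisfies Δ∘σ ∼ ι_Ω. -/

import Mathlib

attribute [local instance] Classical.decEq

/-- An abstract simplicial complex on vertex set `V`. -/
structure SC (V : Type) where
  faces : Set (Finset V)
  down_closed : ∀ {σ τ : Finset V}, σ ∈ faces → τ ⊆ σ → τ.Nonempty → τ ∈ faces

/-- A vertex map inducing a simplicial map `K → L`. -/
def IsSimplicialMap {V W : Type} (K : SC V) (L : SC W) (f : V → W) : Prop :=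
  ∀ σ ∈ K.faces, σ.image f ∈ L.faces

/-- Two maps are contiguous: for each simplex, the union of images is a simplex. -/
def Contiguous {V W : Type} (K : SC V) (L : SC W) (f g : V → W) : Prop :=
  ∀ σ ∈ K.faces, σ.image f ∪ σ.image g ∈ L.faces

/-- Being in the same contiguity class: connected by a finite chain of contiguous maps. -/
def ContigClass {V W : Type} (K : SC V) (L : SC W) : (V → W) → (V → W) → Prop :=
  Relation.ReflTransGen (Contiguous K L)

/-- The categorical product of two simplicial complexes. -/
def prodSC {V W : Type} (K : SC V) (L : SC W) : SC (V × W) where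
  faces := {σ | σ.image Prod.fst ∈ K.faces ∧ σ.image Prod.snd ∈ L.faces}
  down_closed := fun hσ hτσ hne =>
    ⟨K.down_closed hσ.1 (Finset.image_subset_image hτσ) (hne.image _),
     L.down_closed hσ.2 (Finset.image_subset_image hτσ) (hne.image _)⟩

/-- `Ω` is a Farber subcomplex of `K Π K`: a subcomplex admitting a simplicial map
`s : Ω → K` with `Δ ∘ s` in the contiguity class of the inclusion. -/
def IsFarber {V : Type} (K : SC V) (Ω : SC (V × V)) : Prop :=
  Ω.faces ⊆ (prodSC K K).faces ∧
  ∃ s : V × V → V, IsSimplicialMap Ω K s ∧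
    ContigClass Ω (prodSC K K) (fun p => (s p, s p)) id

/-- `K Π K` is covered by `n + 1` Farber subcomplexes. -/
def TCle {V : Type} (K : SC V) (n : ℕ) : Prop :=
  ∃ Ω : Fin (n + 1) → SC (V × V), (∀ i, IsFarber K (Ω i)) ∧
    ∀ σ ∈ (prodSC K K).faces, ∃ i, σ ∈ (Ω i).faces

/-- Discrete topological complexity. -/
noncomputable def TCdisc {V : Type} (K : SC V) : ℕ∞ :=
  sInf {n : ℕ∞ | ∃ m : ℕ, n = (m : ℕ∞) ∧ TCle K m}

/-- A categorical subcomplex: the inclusion is in the contiguity class of a constant map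
at a vertex of `K`. -/
def IsCategorical {V : Type} (K : SC V) (L : SC V) : Prop :=
  L.faces ⊆ K.faces ∧ ∃ v : V, {v} ∈ K.faces ∧ ContigClass L K id (fun _ => v)

/-- `K` is covered by `n + 1` categorical subcomplexes. -/
def scatLe {V : Type} (K : SC V) (n : ℕ) : Prop :=
  ∃ L : Fin (n + 1) → SC V, (∀ i, IsCategorical K (L i)) ∧
    ∀ σ ∈ K.faces, ∃ i, σ ∈ (L i).faces

/-- Normalized simplicial LS-category. -/
noncomputable def scat {V : Type} (K : SC V) : ℕ∞ :=
  sInf {n : ℕ∞ | ∃ m : ℕ, n = (m : ℕ∞) ∧ scatLe K m}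

/-- The preimage subcomplex of a subcomplex `Ω` under a vertex map `f`,
inside an ambient complex `M`. -/
def preimSC {V W : Type} (M : SC W) (Ω : SC V) (f : W → V) : SC W where
  faces := {τ | τ ∈ M.faces ∧ τ.image f ∈ Ω.faces}
  down_closed := fun hσ hτσ hne =>
    ⟨M.down_closed hσ.1 hτσ hne,
     Ω.down_closed hσ.2 (Finset.image_subset_image hτσ) (hne.image _)⟩

/-- `K` and `L` have the same strong homotopy type. -/
def StrongEquiv {V W : Type} (K : SC V) (L : SC W) : Prop :=
  ∃ (φ : V → W) (ψ : W → V), IsSimplicialMap K L φ ∧ IsSimplicialMap L K ψ ∧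
    ContigClass L L (φ ∘ ψ) id ∧ ContigClass K K (ψ ∘ φ) id

/-- `K` is edge-path connected. -/
def EdgeConn {V : Type} (K : SC V) : Prop :=
  ∀ v w : V, {v} ∈ K.faces → {w} ∈ K.faces →
    Relation.ReflTransGen (fun a b => ({a, b} : Finset V) ∈ K.faces) v w

/-- `K` is strongly collapsible: the identity is in the contiguity class of a constant map. -/
def StronglyCollapsible {V : Type} (K : SC V) : Prop :=
  ∃ v : V, {v} ∈ K.faces ∧ ContigClass K K id (fun _ => v)

/-! The constant map at `z = (z₁, z₂)` is in the contiguity class of the constant map at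
`(z₁, z₁)`, by walking the second coordinate along an edge path from `z₁` to `z₂`.
Postcomposing `ι_Ω ∼ const z` with the simplicial map `Δ ∘ π₁` gives
`Δ ∘ π₁|_Ω ∼ const (z₁, z₁)`, and chaining
`Δ ∘ π₁|_Ω ∼ const (z₁, z₁) ∼ const z ∼ ι_Ω` gives the claim. -/

theorem IsSimplicialMap.comp {V W U : Type} {K : SC V} {L : SC W} {M : SC U}
    {g : W → U} {f : V → W} (hg : IsSimplicialMap L M g) (hf : IsSimplicialMap K L f) :
    IsSimplicialMap K M (g ∘ f) := by
  intro σ hσ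
  rw [← Finset.image_image]
  exact hg _ (hf σ hσ)

theorem isSimplicialMap_fst {V W : Type} (K : SC V) (L : SC W) :
    IsSimplicialMap (prodSC K L) K Prod.fst :=
  fun _ hσ => hσ.1

theorem isSimplicialMap_diag {V : Type} (K : SC V) :
    IsSimplicialMap K (prodSC K K) (fun v => (v, v)) := by
  intro σ hσ
  simp only [prodSC, Set.mem_ofPred_eq, Finset.image_image, Function.comp_def,
    Finset.image_id', and_self]
  exact hσ

theorem Contiguous.symm {V W : Type} {K : SC V} {L : SC W} {f g : V → W}
    (h : Contiguous K L f g) : Contiguous K L g f := by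
  intro σ hσ
  rw [Finset.union_comm]
  exact h σ hσ

theorem ContigClass.symm {V W : Type} {K : SC V} {L : SC W} {f g : V → W}
    (h : ContigClass K L f g) : ContigClass K L g f :=
  have : Std.Symm (Contiguous K L) := ⟨fun _ _ => Contiguous.symm⟩
  Std.Symm.symm (r := Relation.ReflTransGen (Contiguous K L)) _ _ h

theorem ContigClass.comp_left {V W U : Type} {K : SC V} {L : SC W} {M : SC U}
    {g : W → U} (hg : IsSimplicialMap L M g) {f₁ f₂ : V → W}
    (h : ContigClass K L f₁ f₂) : ContigClass K M (g ∘ f₁) (g ∘ f₂) := by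
  refine Relation.ReflTransGen.lift (g ∘ ·) (fun f₁ f₂ hf σ hσ => ?_) _ _ h
  simpa only [Finset.image_union, Finset.image_image] using hg _ (hf σ hσ)

/-- `SC` does not decide whether `∅` is a face, hence `hempty`. The instance binder lets the
edge relation agree with the `DecidableEq` instance found on product types. -/
theorem contigClass_const_of_edgePath {V W : Type} [DecidableEq W] {K : SC V} {L : SC W}
    (hempty : ∅ ∈ K.faces → ∅ ∈ L.faces) {a b : W}
    (hab : Relation.ReflTransGen (fun a b => ({a, b} : Finset W) ∈ L.faces) a b) :
    ContigClass K L (fun _ => a) (fun _ => b) := by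
  refine Relation.ReflTransGen.lift (fun c _ => c) (fun c d hcd σ hσ => ?_) _ _ hab
  rcases σ.eq_empty_or_nonempty with rfl | hne
  · simpa using hempty hσ
  · convert hcd using 1
    ext
    simp [Finset.image_const hne]

theorem edgePath_prod_left {V W : Type} {K : SC V} {L : SC W} {c : V}
    (hc : {c} ∈ K.faces) {a b : W}
    (hab : Relation.ReflTransGen (fun a b => ({a, b} : Finset W) ∈ L.faces) a b) :
    Relation.ReflTransGen (fun p q => ({p, q} : Finset (V × W)) ∈ (prodSC K L).faces)
      (c, a) (c, b) := by
  refine Relation.ReflTransGen.lift (fun w => (c, w)) (fun d e hde => ?_) _ _ hab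
  change {(c, d), (c, e)} ∈ (prodSC K L).faces
  simpa [prodSC] using And.intro hc hde

/-- for edge-path connected `K`, a categorical subcomplex of `K Π K`
is a Farber subcomplex, with section `π₁|_Ω`. -/
theorem categorical_is_farber {V : Type} (K : SC V) (h : EdgeConn K)
    (Ω : SC (V × V)) (hΩ : Ω.faces ⊆ (prodSC K K).faces)
    (hcat : ∃ z : V × V, {z} ∈ (prodSC K K).faces ∧
      ContigClass Ω (prodSC K K) id (fun _ => z)) :
    IsFarber K Ω ∧ ContigClass Ω (prodSC K K) (fun p => (p.1, p.1)) id := by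
  obtain ⟨z, hz, hcontr⟩ := hcat
  have hz₁ : {z.1} ∈ K.faces := by simpa using hz.1
  have hz₂ : {z.2} ∈ K.faces := by simpa using hz.2
  have hdiag : ContigClass Ω (prodSC K K) (fun p => (p.1, p.1)) (fun _ => (z.1, z.1)) :=
    hcontr.comp_left ((isSimplicialMap_diag K).comp (isSimplicialMap_fst K K))
  have hwalk : ContigClass Ω (prodSC K K) (fun _ => (z.1, z.1)) (fun _ => z) :=
    contigClass_const_of_edgePath (hΩ ·)
      (edgePath_prod_left hz₁ (h z.1 z.2 hz₁ hz₂))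
  have hmain := (hdiag.trans hwalk).trans hcontr.symm
  exact ⟨⟨hΩ, Prod.fst, fun _ hσ => (hΩ hσ).1, hmain⟩, hmain⟩
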